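/- Let n be a natural number and c : {0,1}^n → ℝ an arbitrary function. Then for every x ∈ {0,1}^n with support set S_x = {i : x_i = 1}: Σ_{T ⊆ [n]} c(v_T) · Π_{i∈T} x_i · Π_{i∉T} (1 − 2x_i) = Σ_{T ⊆ S_x} (−1)^{|S_x| − |T|} c(v_T), where v_T ∈ {0,1}^n is the characteristic vector of T. That is, evaluating the network form of c at the input (x, 1−2x) computes the alternating (inclusion-exclusion) sum of c over subsets of the support of x. -/

import Mathlib

/-! At a binary point the factors of a monomial are `x_i ∈ {0, 1}` and `1 - 2 x_i ∈ {1, -1}`, so the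
monomial of `T` vanishes unless `T ⊆ S_x`, and then it is `(-1)` raised to the number of indices
in `S_x \ T`. -/

open Finset

theorem Fin.cast_val_two_eq_ite {R : Type*} [AddMonoidWithOne R] (a : Fin 2) :
    ((a : ℕ) : R) = if a = 1 then 1 else 0 := by
  fin_cases a <;> simp

theorem Finset.prod_boole_mul_prod_compl_one_sub_two_mul_boole {ι R : Type*} [Fintype ι]
    [DecidableEq ι] [CommRing R] (S T : Finset ι) :
    (∏ i ∈ T, (if i ∈ S then 1 else 0 : R)) * ∏ i ∈ Tᶜ, (1 - 2 * if i ∈ S then 1 else 0 : R) =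
      if T ⊆ S then (-1) ^ (#S - #T) else 0 := by
  rw [prod_boole]
  by_cases hTS : T ⊆ S
  · have hsign : ∀ i ∈ Tᶜ, (1 - 2 * if i ∈ S then 1 else 0 : R) = if i ∈ S then -1 else 1 := by
      intro i _
      split_ifs <;> norm_num
    rw [if_pos fun i hi => hTS hi, if_pos hTS, one_mul, prod_congr rfl hsign, prod_ite_mem, prod_const,
      inter_comm, ← sdiff_eq_inter_compl, card_sdiff_of_subset hTS]
  · rw [if_neg fun h => hTS fun i hi => h i hi, if_neg hTS, zero_mul]

/-- Evaluating the network form of `c` at the input `(x, 1 - 2x)` computes the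
alternating (inclusion-exclusion) sum of `c` over subsets of the support of
`x`. -/
theorem network_form_eval_inclusion_exclusion (n : ℕ)
    (c : (Fin n → Fin 2) → ℝ) (x : Fin n → Fin 2) :
    ∑ T : Finset (Fin n),
        c (fun i => if i ∈ T then 1 else 0) *
          ((∏ i ∈ T, ((x i : ℕ) : ℝ)) * ∏ i ∈ Tᶜ, (1 - 2 * ((x i : ℕ) : ℝ))) =
    ∑ T ∈ (Finset.univ.filter (fun i => x i = 1)).powerset,
        (-1 : ℝ) ^ ((Finset.univ.filter (fun i => x i = 1)).card - T.card) *
          c (fun i => if i ∈ T then 1 else 0) := by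
  set S : Finset (Fin n) := univ.filter (fun i => x i = 1)
  have hx : ∀ i, ((x i : ℕ) : ℝ) = if i ∈ S then 1 else 0 := fun i => by
    simp [S, Fin.cast_val_two_eq_ite]
  simp_rw [hx, prod_boole_mul_prod_compl_one_sub_two_mul_boole, mul_ite, mul_zero, sum_ite,
    sum_const_zero, add_zero, filter_subset_univ]
  exact sum_congr rfl fun T _ => mul_comm _ _
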